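/- arXiv:2004.03078 — 4 statements merged into one kernel-verified Lean document; each statement's English description precedes it below -/
import Mathlib

section
/- Let n ≥ 1, let τ > 0, let ρ : [0,τ] → Mₙ(ℂ) be a continuously differentiable family of positive definite density matrices with derivative ρ̇ₜ, let F be a nonempty compact set of positive definite density matrices on ℂⁿ, define M(ϱ) := min_{σ∈F} S(ϱ‖σ), and let σ_τ^▼ ∈ F attain this minimum for ρ_τ. Set ΔM := M(ρ_τ) − M(ρ₀) and ΔS := S(ρ_τ) − S(ρ₀). If ΔM + ΔS ≤ 0, then |ΔM + ΔS| ≤ ∫₀^τ |Tr[ρ̇ₜ · log σ_τ^▼]| dt; equivalently τ ≥ T̃_M(ρ₀,ρ_τ) := |ΔM + ΔS| / ⟨|Tr[ρ̇ₜ log σ_τ^▼]|⟩ₜ, where ⟨f⟩ₜ := (1/τ)∫₀^τ f(t) dt. -/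
open Matrix MeasureTheory intervalIntegral Filter
open scoped ComplexOrder

attribute [local instance] Matrix.normedAddCommGroup Matrix.normedSpace

/-- Functional-calculus logarithm of a Hermitian matrix (junk value `0` otherwise):
for `A = U diag(eigenvalues) U†` it is `U diag(log eigenvalues) U†`. -/
noncomputable def matLog {n : ℕ} (A : Matrix (Fin n) (Fin n) ℂ) :
    Matrix (Fin n) (Fin n) ℂ :=
  if hA : A.IsHermitian then
    (hA.eigenvectorUnitary : Matrix (Fin n) (Fin n) ℂ) *
      Matrix.diagonal (fun i => (Real.log (hA.eigenvalues i) : ℂ)) *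
      (hA.eigenvectorUnitary : Matrix (Fin n) (Fin n) ℂ)ᴴ
  else 0

/-- Quantum relative entropy `S(ρ‖σ) = Tr[ρ (log ρ - log σ)]`. -/
noncomputable def relEnt {n : ℕ} (ρ σ : Matrix (Fin n) (Fin n) ℂ) : ℝ :=
  ((ρ * (matLog ρ - matLog σ)).trace).re

/-- Von Neumann entropy `S(ρ) = -Tr[ρ log ρ]`. -/
noncomputable def vnEnt {n : ℕ} (ρ : Matrix (Fin n) (Fin n) ℂ) : ℝ :=
  -((ρ * matLog ρ).trace).re

/-- A positive definite density matrix: positive definite with unit trace. -/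
def IsPDDensity {n : ℕ} (ρ : Matrix (Fin n) (Fin n) ℂ) : Prop :=
  ρ.PosDef ∧ ρ.trace = 1

/-!
Since `S(ϱ‖σ) = -S(ϱ) - Tr[ϱ log σ]`, the entropy terms cancel when `M(ρ_τ) = S(ρ_τ‖σ_τ^▼)` and
`M(ρ₀) ≤ S(ρ₀‖σ_τ^▼)` are combined: `-(ΔM + ΔS) ≤ Tr[(ρ_τ - ρ₀) log σ_τ^▼]`, and by the
fundamental theorem of calculus the right side is `∫₀^τ Tr[ρ̇ₜ log σ_τ^▼] dt`.
-/

lemma Matrix.PosSemidef.eigenvalues_le_one {m : Type*} [Fintype m] [DecidableEq m]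
    {σ : Matrix m m ℂ} (hσ : σ.PosSemidef) (htr : σ.trace = 1) (i : m) :
    hσ.isHermitian.eigenvalues i ≤ 1 := by
  have hsum : ∑ j, hσ.isHermitian.eigenvalues j = 1 := by
    have h := hσ.isHermitian.trace_eq_sum_eigenvalues.symm.trans htr
    simpa using congrArg Complex.re h
  exact hsum ▸ Finset.single_le_sum (fun j _ => hσ.eigenvalues_nonneg j) (Finset.mem_univ i)

lemma trace_mul_matLog_eq_sum {n : ℕ} (P σ : Matrix (Fin n) (Fin n) ℂ) (hσ : σ.IsHermitian) :
    (P * matLog σ).trace =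
      ∑ i, ((hσ.eigenvectorUnitary : Matrix (Fin n) (Fin n) ℂ)ᴴ * P *
        hσ.eigenvectorUnitary) i i * Real.log (hσ.eigenvalues i) := by
  rw [matLog, dif_pos hσ, ← mul_assoc, ← mul_assoc, trace_mul_cycle, ← mul_assoc]
  simp [Matrix.trace, Matrix.mul_diagonal]

/-- `log σ ≤ 0` for a density matrix `σ`, so it pairs nonpositively with positive matrices. -/
lemma re_trace_mul_matLog_nonpos {n : ℕ} {P σ : Matrix (Fin n) (Fin n) ℂ}
    (hP : P.PosSemidef) (hσ : σ.PosSemidef) (htr : σ.trace = 1) :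
    ((P * matLog σ).trace).re ≤ 0 := by
  rw [trace_mul_matLog_eq_sum P σ hσ.isHermitian, Complex.re_sum]
  refine Finset.sum_nonpos fun i _ => ?_
  have hdiag := (hP.conjTranspose_mul_mul_same
    (hσ.isHermitian.eigenvectorUnitary : Matrix (Fin n) (Fin n) ℂ)).diag_nonneg (i := i)
  have hlog : Real.log (hσ.isHermitian.eigenvalues i) ≤ 0 :=
    Real.log_nonpos (hσ.eigenvalues_nonneg i) (hσ.eigenvalues_le_one htr i)
  rw [Complex.re_mul_ofReal]
  exact mul_nonpos_of_nonneg_of_nonpos (Complex.nonneg_iff.mp hdiag).1 hlog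

lemma relEnt_eq_neg_vnEnt_sub {n : ℕ} (ϱ σ : Matrix (Fin n) (Fin n) ℂ) :
    relEnt ϱ σ = -vnEnt ϱ - ((ϱ * matLog σ).trace).re := by
  simp only [relEnt, vnEnt, mul_sub, trace_sub, Complex.sub_re, neg_neg]

lemma neg_vnEnt_le_relEnt {n : ℕ} {ϱ σ : Matrix (Fin n) (Fin n) ℂ}
    (hϱ : ϱ.PosSemidef) (hσ : σ.PosSemidef) (htr : σ.trace = 1) :
    -vnEnt ϱ ≤ relEnt ϱ σ := by
  rw [relEnt_eq_neg_vnEnt_sub]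
  linarith [re_trace_mul_matLog_nonpos hϱ hσ htr]

lemma HasDerivAt.re_trace_mul_const {m : Type*} [Fintype m] {ρ : ℝ → Matrix m m ℂ}
    {ρ' : Matrix m m ℂ} {t : ℝ} (h : HasDerivAt ρ ρ' t) (A : Matrix m m ℂ) :
    HasDerivAt (fun s => ((ρ s * A).trace).re) ((ρ' * A).trace).re t := by
  let L : Matrix m m ℂ →L[ℝ] ℝ := LinearMap.toContinuousLinearMap
    (Complex.reLm.comp ((traceLinearMap m ℝ ℂ).comp
      ((LinearMap.mulRight ℂ A).restrictScalars ℝ)))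
  exact L.hasFDerivAt.comp_hasDerivAt t h

lemma re_trace_mul_sub_le_integral_abs {m : Type*} [Fintype m] {τ : ℝ} (hτ : 0 ≤ τ)
    {ρ ρ' : ℝ → Matrix m m ℂ} (hderiv : ∀ t ∈ Set.Icc 0 τ, HasDerivAt ρ (ρ' t) t)
    (hcont : ContinuousOn ρ' (Set.Icc 0 τ)) (A : Matrix m m ℂ) :
    ((ρ τ * A).trace).re - ((ρ 0 * A).trace).re ≤
      ∫ t in (0 : ℝ)..τ, |((ρ' t * A).trace).re| := by
  rw [← Set.uIcc_of_le hτ] at hderiv hcont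
  have hcont' : ContinuousOn (fun t => ((ρ' t * A).trace).re) (Set.uIcc 0 τ) :=
    (Complex.continuous_re.comp (continuous_id.matrix_trace.comp
      (continuous_id.matrix_mul continuous_const))).comp_continuousOn hcont
  rw [← integral_eq_sub_of_hasDerivAt (fun t ht => (hderiv t ht).re_trace_mul_const A)
    hcont'.intervalIntegrable]
  exact (le_abs_self _).trans (abs_integral_le_integral_abs hτ)

lemma div_one_div_mul_le {x I τ : ℝ} (hτ : 0 < τ) (hx : 0 ≤ x) (hxI : x ≤ I) :
    x / ((1 / τ) * I) ≤ τ := by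
  have hxI' : x / I ≤ 1 := div_le_one_of_le₀ hxI (hx.trans hxI)
  calc x / ((1 / τ) * I) = τ * (x / I) := by rw [one_div, div_mul_eq_div_div, div_inv_eq_mul]; ring
    _ ≤ τ * 1 := by gcongr
    _ = τ := mul_one τ

theorem resource_speed_limit_of_nonpos_general
    {n : ℕ} {τ : ℝ} (hτ : 0 < τ)
    (ρ ρ' : ℝ → Matrix (Fin n) (Fin n) ℂ)
    (hρ : ∀ t ∈ Set.Icc (0 : ℝ) τ, IsPDDensity (ρ t))
    (hderiv : ∀ t ∈ Set.Icc (0 : ℝ) τ, HasDerivAt ρ (ρ' t) t)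
    (hcont : ContinuousOn ρ' (Set.Icc (0 : ℝ) τ))
    (F : Set (Matrix (Fin n) (Fin n) ℂ))
    (hF : ∀ σ ∈ F, IsPDDensity σ)
    (στ : Matrix (Fin n) (Fin n) ℂ) (hστF : στ ∈ F)
    (hστmin : ∀ σ ∈ F, relEnt (ρ τ) στ ≤ relEnt (ρ τ) σ)
    (ΔM ΔS : ℝ)
    (hΔM : ΔM = sInf ((fun σ => relEnt (ρ τ) σ) '' F)
              - sInf ((fun σ => relEnt (ρ 0) σ) '' F))
    (hΔS : ΔS = vnEnt (ρ τ) - vnEnt (ρ 0))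
    (hneg : ΔM + ΔS ≤ 0) :
    |ΔM + ΔS| ≤ (∫ t in (0 : ℝ)..τ, |((ρ' t * matLog στ).trace).re|) ∧
    τ ≥ |ΔM + ΔS| / ((1 / τ) * ∫ t in (0 : ℝ)..τ, |((ρ' t * matLog στ).trace).re|) := by
  have hMτ : sInf ((fun σ => relEnt (ρ τ) σ) '' F) = relEnt (ρ τ) στ :=
    IsLeast.csInf_eq ⟨⟨στ, hστF, rfl⟩, by rintro _ ⟨σ, hσ, rfl⟩; exact hστmin σ hσ⟩
  -- `M(ρ₀)` is a genuine infimum because `S(ρ₀‖σ) ≥ -S(ρ₀)` on density matrices.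
  have hM₀ : sInf ((fun σ => relEnt (ρ 0) σ) '' F) ≤ relEnt (ρ 0) στ := by
    refine csInf_le ⟨-vnEnt (ρ 0), ?_⟩ ⟨στ, hστF, rfl⟩
    rintro _ ⟨σ, hσ, rfl⟩
    exact neg_vnEnt_le_relEnt (hρ 0 ⟨le_rfl, hτ.le⟩).1.posSemidef (hF σ hσ).1.posSemidef
      (hF σ hσ).2
  have hbound : |ΔM + ΔS| ≤ ∫ t in (0 : ℝ)..τ, |((ρ' t * matLog στ).trace).re| := by
    refine le_trans ?_ (re_trace_mul_sub_le_integral_abs hτ.le hderiv hcont (matLog στ))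
    rw [abs_of_nonpos hneg, hΔM, hΔS, hMτ]
    linarith [relEnt_eq_neg_vnEnt_sub (ρ τ) στ, relEnt_eq_neg_vnEnt_sub (ρ 0) στ]
  exact ⟨hbound, div_one_div_mul_le hτ (abs_nonneg _) hbound⟩

/-- **Corollary 1 of the paper, ΔM + ΔS ≤ 0 case (resource speed limit with total
entropy variation in the numerator).** With `στ` the closest free state to `ρ_τ`:
if `ΔM + ΔS ≤ 0` then `|ΔM + ΔS| ≤ ∫₀^τ |Tr[ρ̇ₜ log στ]| dt`, i.e.
`τ ≥ T̃_M(ρ₀, ρ_τ)`. -/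
theorem resource_speed_limit_of_nonpos
    {n : ℕ} (hn : 1 ≤ n) {τ : ℝ} (hτ : 0 < τ)
    (ρ ρ' : ℝ → Matrix (Fin n) (Fin n) ℂ)
    (hρ : ∀ t ∈ Set.Icc (0 : ℝ) τ, IsPDDensity (ρ t))
    (hderiv : ∀ t ∈ Set.Icc (0 : ℝ) τ, HasDerivAt ρ (ρ' t) t)
    (hcont : ContinuousOn ρ' (Set.Icc (0 : ℝ) τ))
    (F : Set (Matrix (Fin n) (Fin n) ℂ))
    (hFne : F.Nonempty) (hFcpt : IsCompact F) (hF : ∀ σ ∈ F, IsPDDensity σ)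
    (στ : Matrix (Fin n) (Fin n) ℂ) (hστF : στ ∈ F)
    (hστmin : ∀ σ ∈ F, relEnt (ρ τ) στ ≤ relEnt (ρ τ) σ)
    (ΔM ΔS : ℝ)
    (hΔM : ΔM = sInf ((fun σ => relEnt (ρ τ) σ) '' F)
              - sInf ((fun σ => relEnt (ρ 0) σ) '' F))
    (hΔS : ΔS = vnEnt (ρ τ) - vnEnt (ρ 0))
    (hneg : ΔM + ΔS ≤ 0) :
    |ΔM + ΔS| ≤ (∫ t in (0 : ℝ)..τ, |((ρ' t * matLog στ).trace).re|) ∧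
    τ ≥ |ΔM + ΔS| / ((1 / τ) * ∫ t in (0 : ℝ)..τ, |((ρ' t * matLog στ).trace).re|) :=
  resource_speed_limit_of_nonpos_general hτ ρ ρ' hρ hderiv hcont F hF στ hστF hστmin ΔM ΔS hΔM hΔS
    hneg
end

section
/- (Resource degradation bound.) Let n ≥ 1, let τ > 0, let ρ : [0,τ] → Mₙ(ℂ) be a continuously differentiable family of positive definite density matrices with derivative ρ̇ₜ, let σ be a positive definite density matrix, and suppose ρ_τ = σ. Set ΔS := S(ρ_τ) − S(ρ₀). Then |S(ρ₀‖σ) − ΔS| ≤ ∫₀^τ |Tr[ρ̇ₜ · log σ]| dt; equivalently τ ≥ T_d(ρ₀,σ) := |S(ρ₀‖σ) − ΔS| / ⟨|Tr[ρ̇ₜ log σ]|⟩ₜ, where ⟨f⟩ₜ := (1/τ)∫₀^τ f(t) dt. -/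
/-!
The terms `Tr[ρ₀ log ρ₀]` of `S(ρ₀‖σ)` and of `ΔS` cancel, so with `σ = ρ_τ` one gets
`S(ρ₀‖σ) - ΔS = Tr[ρ_τ log σ] - Tr[ρ₀ log σ]`. By the fundamental theorem of calculus this is
`∫₀^τ Tr[ρ̇ₜ log σ] dt`, whose absolute value is at most `∫₀^τ |Tr[ρ̇ₜ log σ]| dt`.
-/

open Matrix MeasureTheory intervalIntegral Filter
open scoped ComplexOrder

attribute [local instance] Matrix.normedAddCommGroup Matrix.normedSpace

noncomputable def reTraceMulRight {n : ℕ} (M : Matrix (Fin n) (Fin n) ℂ) :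
    Matrix (Fin n) (Fin n) ℂ →L[ℝ] ℝ :=
  LinearMap.toContinuousLinearMap
    (Complex.reLm.comp
      (((Matrix.traceLinearMap (Fin n) ℂ ℂ).restrictScalars ℝ).comp
        ((LinearMap.mulRight ℂ M).restrictScalars ℝ)))

lemma relEnt_sub_vnEnt_sub_vnEnt {n : ℕ} (ρ σ : Matrix (Fin n) (Fin n) ℂ) :
    relEnt ρ σ - (vnEnt σ - vnEnt ρ) =
      ((σ * matLog σ).trace).re - ((ρ * matLog σ).trace).re := by
  simp only [relEnt, vnEnt, Matrix.mul_sub, Matrix.trace_sub, Complex.sub_re]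
  ring

lemma abs_sub_le_integral_abs_of_hasDerivAt {g g' : ℝ → ℝ} {a b : ℝ} (hab : a ≤ b)
    (hg : ∀ t ∈ Set.Icc a b, HasDerivAt g (g' t) t) (hg' : ContinuousOn g' (Set.Icc a b)) :
    |g b - g a| ≤ ∫ t in a..b, |g' t| := by
  rw [← Set.uIcc_of_le hab] at hg hg'
  rw [← integral_eq_sub_of_hasDerivAt hg hg'.intervalIntegrable]
  exact abs_integral_le_integral_abs hab

lemma abs_sub_reTraceMulRight_le_integral {n : ℕ} {ρ ρ' : ℝ → Matrix (Fin n) (Fin n) ℂ}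
    {a b : ℝ} (hab : a ≤ b) (hρ : ∀ t ∈ Set.Icc a b, HasDerivAt ρ (ρ' t) t)
    (hρ' : ContinuousOn ρ' (Set.Icc a b)) (M : Matrix (Fin n) (Fin n) ℂ) :
    |((ρ b * M).trace).re - ((ρ a * M).trace).re| ≤
      ∫ t in a..b, |((ρ' t * M).trace).re| :=
  abs_sub_le_integral_abs_of_hasDerivAt (g := fun t => reTraceMulRight M (ρ t)) hab
    (fun t ht => (reTraceMulRight M).hasFDerivAt.comp_hasDerivAt t (hρ t ht))
    ((reTraceMulRight M).continuous.comp_continuousOn hρ')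

lemma div_one_div_mul_le_of_le {x I τ : ℝ} (hτ : 0 < τ) (hI : 0 ≤ I) (hxI : x ≤ I) :
    x / ((1 / τ) * I) ≤ τ := by
  rw [one_div, div_mul_eq_div_div_swap, div_inv_eq_mul]
  exact mul_le_of_le_one_left hτ.le (div_le_one_of_le₀ hxI hI)

theorem resource_degradation_bound_general
    {n : ℕ} {τ : ℝ} (hτ : 0 < τ)
    (ρ ρ' : ℝ → Matrix (Fin n) (Fin n) ℂ)
    (hderiv : ∀ t ∈ Set.Icc (0 : ℝ) τ, HasDerivAt ρ (ρ' t) t)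
    (hcont : ContinuousOn ρ' (Set.Icc (0 : ℝ) τ))
    (σ : Matrix (Fin n) (Fin n) ℂ) (hρτ : ρ τ = σ)
    (ΔS : ℝ) (hΔS : ΔS = vnEnt (ρ τ) - vnEnt (ρ 0)) :
    |relEnt (ρ 0) σ - ΔS| ≤ (∫ t in (0 : ℝ)..τ, |((ρ' t * matLog σ).trace).re|) ∧
    τ ≥ |relEnt (ρ 0) σ - ΔS| /
        ((1 / τ) * ∫ t in (0 : ℝ)..τ, |((ρ' t * matLog σ).trace).re|) := by
  have hbound : |relEnt (ρ 0) σ - ΔS| ≤ ∫ t in (0 : ℝ)..τ, |((ρ' t * matLog σ).trace).re| := by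
    subst hρτ hΔS
    rw [relEnt_sub_vnEnt_sub_vnEnt]
    exact abs_sub_reTraceMulRight_le_integral hτ.le hderiv hcont _
  exact ⟨hbound, div_one_div_mul_le_of_le hτ
    (integral_nonneg hτ.le fun _ _ => abs_nonneg _) hbound⟩

/-- **Corollary 3 of the paper (resource degradation bound).** For a C¹ family `ρₜ`
of positive definite density matrices ending in the free state `σ = ρ_τ`:
`|S(ρ₀‖σ) - ΔS| ≤ ∫₀^τ |Tr[ρ̇ₜ log σ]| dt`, i.e. `τ ≥ T_d(ρ₀, σ)`. -/
theorem resource_degradation_bound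
    {n : ℕ} (hn : 1 ≤ n) {τ : ℝ} (hτ : 0 < τ)
    (ρ ρ' : ℝ → Matrix (Fin n) (Fin n) ℂ)
    (hρ : ∀ t ∈ Set.Icc (0 : ℝ) τ, IsPDDensity (ρ t))
    (hderiv : ∀ t ∈ Set.Icc (0 : ℝ) τ, HasDerivAt ρ (ρ' t) t)
    (hcont : ContinuousOn ρ' (Set.Icc (0 : ℝ) τ))
    (σ : Matrix (Fin n) (Fin n) ℂ) (hσ : IsPDDensity σ) (hρτ : ρ τ = σ)
    (ΔS : ℝ) (hΔS : ΔS = vnEnt (ρ τ) - vnEnt (ρ 0)) :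
    |relEnt (ρ 0) σ - ΔS| ≤ (∫ t in (0 : ℝ)..τ, |((ρ' t * matLog σ).trace).re|) ∧
    τ ≥ |relEnt (ρ 0) σ - ΔS| /
        ((1 / τ) * ∫ t in (0 : ℝ)..τ, |((ρ' t * matLog σ).trace).re|) :=
  resource_degradation_bound_general hτ ρ ρ' hderiv hcont σ hρτ ΔS hΔS
end

section
/- (Key inequalities in the proof of Theorem 1.) Let n ≥ 1, let ρ₀ and ρ_τ be positive definite density matrices on ℂⁿ, let F be a nonempty compact set of positive definite density matrices, define M(ϱ) := min_{σ∈F} S(ϱ‖σ), and let σ₀^▼, σ_τ^▼ ∈ F attain this minimum for ρ₀ and ρ_τ respectively. Set ΔS := S(ρ_τ) − S(ρ₀). Then M(ρ₀) − M(ρ_τ) ≤ ΔS + Tr[(ρ_τ − ρ₀) · log σ_τ^▼] and M(ρ_τ) − M(ρ₀) ≤ −ΔS − Tr[(ρ_τ − ρ₀) · log σ₀^▼]. -/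
open Matrix MeasureTheory intervalIntegral Filter
open scoped ComplexOrder

attribute [local instance] Matrix.normedAddCommGroup Matrix.normedSpace

theorem relEnt_sub_relEnt_left {n : ℕ} (ρ ρ' σ : Matrix (Fin n) (Fin n) ℂ) :
    relEnt ρ σ - relEnt ρ' σ = (vnEnt ρ' - vnEnt ρ) + (((ρ' - ρ) * matLog σ).trace).re := by
  simp only [relEnt, vnEnt, Matrix.mul_sub, Matrix.sub_mul, Matrix.trace_sub, Complex.sub_re]
  ring

theorem key_inequalities_theorem_one_general
    {n : ℕ}
    (ρ₀ ρτ : Matrix (Fin n) (Fin n) ℂ)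
    (F : Set (Matrix (Fin n) (Fin n) ℂ))
    (σ₀ στ : Matrix (Fin n) (Fin n) ℂ) (hσ₀F : σ₀ ∈ F) (hστF : στ ∈ F)
    (hσ₀min : ∀ σ ∈ F, relEnt ρ₀ σ₀ ≤ relEnt ρ₀ σ)
    (hστmin : ∀ σ ∈ F, relEnt ρτ στ ≤ relEnt ρτ σ)
    (ΔS : ℝ) (hΔS : ΔS = vnEnt ρτ - vnEnt ρ₀) :
    relEnt ρ₀ σ₀ - relEnt ρτ στ ≤ ΔS + (((ρτ - ρ₀) * matLog στ).trace).re ∧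
    relEnt ρτ στ - relEnt ρ₀ σ₀ ≤ -ΔS - (((ρτ - ρ₀) * matLog σ₀).trace).re := by
  subst hΔS
  constructor
  · calc relEnt ρ₀ σ₀ - relEnt ρτ στ ≤ relEnt ρ₀ στ - relEnt ρτ στ := by
          linarith [hσ₀min στ hστF]
      _ = _ := relEnt_sub_relEnt_left ρ₀ ρτ στ
  · calc relEnt ρτ στ - relEnt ρ₀ σ₀ ≤ relEnt ρτ σ₀ - relEnt ρ₀ σ₀ := by
          linarith [hστmin σ₀ hσ₀F]
      _ = -(relEnt ρ₀ σ₀ - relEnt ρτ σ₀) := by ring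
      _ = _ := by rw [relEnt_sub_relEnt_left]; ring

/-- **Key inequalities in the proof of Theorem 1 of the paper.** With `σ₀`, `στ`
the closest free states to `ρ₀`, `ρ_τ` (so `M(ρ₀) = S(ρ₀‖σ₀)` and
`M(ρ_τ) = S(ρ_τ‖στ)`), one has
`M(ρ₀) - M(ρ_τ) ≤ ΔS + Tr[(ρ_τ - ρ₀) log στ]` and
`M(ρ_τ) - M(ρ₀) ≤ -ΔS - Tr[(ρ_τ - ρ₀) log σ₀]`. -/
theorem key_inequalities_theorem_one
    {n : ℕ} (hn : 1 ≤ n)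
    (ρ₀ ρτ : Matrix (Fin n) (Fin n) ℂ)
    (hρ₀ : IsPDDensity ρ₀) (hρτ : IsPDDensity ρτ)
    (F : Set (Matrix (Fin n) (Fin n) ℂ))
    (hFne : F.Nonempty) (hFcpt : IsCompact F) (hF : ∀ σ ∈ F, IsPDDensity σ)
    (σ₀ στ : Matrix (Fin n) (Fin n) ℂ) (hσ₀F : σ₀ ∈ F) (hστF : στ ∈ F)
    (hσ₀min : ∀ σ ∈ F, relEnt ρ₀ σ₀ ≤ relEnt ρ₀ σ)
    (hστmin : ∀ σ ∈ F, relEnt ρτ στ ≤ relEnt ρτ σ)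
    (ΔS : ℝ) (hΔS : ΔS = vnEnt ρτ - vnEnt ρ₀) :
    relEnt ρ₀ σ₀ - relEnt ρτ στ ≤ ΔS + (((ρτ - ρ₀) * matLog στ).trace).re ∧
    relEnt ρτ στ - relEnt ρ₀ σ₀ ≤ -ΔS - (((ρτ - ρ₀) * matLog σ₀).trace).re :=
  key_inequalities_theorem_one_general ρ₀ ρτ F σ₀ στ hσ₀F hστF hσ₀min hστmin ΔS hΔS
end

section
/- (Saturation of the relative-entropy quantum speed limit under pure dephasing.) Fix p ∈ (0,1), γ > 0, τ > 0. Set a := p/4 + (1−p)/2, b := (1−p)/2, and define the probability vectors r(t) := (a + b e^{−γt}, a − b e^{−γt}, p/4, p/4) for t ∈ [0,τ]. Then |D(r(0)‖r(τ)) − (H(r(τ)) − H(r(0)))| = ∫₀^τ |Σᵢ ṙᵢ(t) log rᵢ(τ)| dt, where D(q‖s) := Σᵢ qᵢ(log qᵢ − log sᵢ) and H(q) := −Σᵢ qᵢ log qᵢ. Equivalently, the quantum speed limit T(ρ₀,ρ_τ) of Corollary 4 equals τ for the pure dephasing orbit of the Werner state. -/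
/-- Classical Kullback–Leibler divergence `D(q‖s) = ∑ᵢ qᵢ (log qᵢ - log sᵢ)`. -/
noncomputable def klDiv4 (q s : Fin 4 → ℝ) : ℝ :=
  ∑ i, q i * (Real.log (q i) - Real.log (s i))

/-- Shannon entropy `H(q) = -∑ᵢ qᵢ log qᵢ`. -/
noncomputable def shannonH4 (q : Fin 4 → ℝ) : ℝ :=
  -∑ i, q i * Real.log (q i)

/-!
The defect `D(q‖s) - (H(s) - H(q))` equals `∑ᵢ (sᵢ - qᵢ) log sᵢ`, which by the fundamental
theorem of calculus is `∫₀^τ ∑ᵢ ṙᵢ(t) log rᵢ(τ) dt`. Under dephasing the spectrum moves along a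
fixed line, `r(t) = c + e^{-γt} v`, so the integrand is `(d/dt e^{-γt}) · ∑ᵢ vᵢ log rᵢ(τ)`: a fixed
number times a function of constant sign. Hence the absolute value can be moved inside the integral.
-/

open Real MeasureTheory

theorem klDiv4_sub_shannonH4_sub (q s : Fin 4 → ℝ) :
    klDiv4 q s - (shannonH4 s - shannonH4 q) = ∑ i, (s i - q i) * log (s i) := by
  simp only [klDiv4, shannonH4, sub_mul, mul_sub, Finset.sum_sub_distrib]
  ring

theorem intervalIntegral_abs_eq_abs_sub_of_hasDerivAt_of_nonpos {ν ν' : ℝ → ℝ} {a b : ℝ}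
    (hab : a ≤ b) (hν : ∀ t, HasDerivAt ν (ν' t) t) (hint : IntervalIntegrable ν' volume a b)
    (hnonpos : ∀ t, ν' t ≤ 0) :
    ∫ t in a..b, |ν' t| = |ν b - ν a| := by
  have hanti : ν b ≤ ν a := antitone_of_hasDerivAt_nonpos hν hnonpos hab
  calc ∫ t in a..b, |ν' t| = -∫ t in a..b, ν' t := by
        rw [← intervalIntegral.integral_neg]
        exact intervalIntegral.integral_congr fun t _ => abs_of_nonpos (hnonpos t)
    _ = |ν b - ν a| := by
        rw [intervalIntegral.integral_eq_sub_of_hasDerivAt (fun t _ => hν t) hint,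
          abs_of_nonpos (sub_nonpos.mpr hanti)]

theorem abs_klDiv4_sub_shannonH4_sub_eq_integral_of_line (c v : Fin 4 → ℝ) {ν ν' : ℝ → ℝ}
    {τ : ℝ} (hτ : 0 ≤ τ) (hν : ∀ t, HasDerivAt ν (ν' t) t)
    (hint : IntervalIntegrable ν' volume 0 τ) (hnonpos : ∀ t, ν' t ≤ 0)
    (r : ℝ → Fin 4 → ℝ) (hr : ∀ t, r t = c + ν t • v) :
    |klDiv4 (r 0) (r τ) - (shannonH4 (r τ) - shannonH4 (r 0))| =
      ∫ t in (0 : ℝ)..τ, |∑ i, deriv (fun s => r s i) t * log (r τ i)| := by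
  set K := ∑ i, v i * log (r τ i)
  have hderiv : ∀ t i, deriv (fun s => r s i) t = ν' t * v i := fun t i => by
    simp only [hr, Pi.add_apply, Pi.smul_apply, smul_eq_mul]
    exact (((hν t).mul_const (v i)).const_add (c i)).deriv
  have hdefect : klDiv4 (r 0) (r τ) - (shannonH4 (r τ) - shannonH4 (r 0)) = (ν τ - ν 0) * K := by
    rw [klDiv4_sub_shannonH4_sub, Finset.mul_sum]
    refine Finset.sum_congr rfl fun i _ => ?_
    simp only [hr, Pi.add_apply, Pi.smul_apply, smul_eq_mul]
    ring
  have hintegrand : ∀ t, |∑ i, deriv (fun s => r s i) t * log (r τ i)| = |ν' t| * |K| := fun t => by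
    simp only [hderiv, mul_assoc, ← Finset.mul_sum, abs_mul, K]
  rw [hdefect, intervalIntegral.integral_congr fun t _ => hintegrand t,
    intervalIntegral.integral_mul_const,
    intervalIntegral_abs_eq_abs_sub_of_hasDerivAt_of_nonpos hτ hν hint hnonpos, abs_mul]

theorem hasDerivAt_exp_const_mul (c t : ℝ) :
    HasDerivAt (fun s => exp (c * s)) (c * exp (c * t)) t := by
  simpa [mul_comm] using ((hasDerivAt_id t).const_mul c).exp

theorem dephasing_saturates_quantum_speed_limit_general
    (p γ τ : ℝ) (hγ : 0 < γ) (hτ : 0 < τ)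
    (a b : ℝ)
    (r : ℝ → Fin 4 → ℝ)
    (hr : r = fun t => ![a + b * Real.exp (-γ * t), a - b * Real.exp (-γ * t),
      p / 4, p / 4]) :
    |klDiv4 (r 0) (r τ) - (shannonH4 (r τ) - shannonH4 (r 0))| =
      ∫ t in (0 : ℝ)..τ, |∑ i, deriv (fun s => r s i) t * Real.log (r τ i)| := by
  have hline : ∀ t, r t = ![a, a, p / 4, p / 4] + exp (-γ * t) • ![b, -b, 0, 0] := fun t => by
    subst hr
    ext i
    fin_cases i <;> simp <;> ring
  have hcont : Continuous fun t => -γ * exp (-γ * t) := by fun_prop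
  refine abs_klDiv4_sub_shannonH4_sub_eq_integral_of_line _ _ hτ.le (hasDerivAt_exp_const_mul (-γ))
    (hcont.intervalIntegrable _ _)
    (fun t => mul_nonpos_of_nonpos_of_nonneg (neg_nonpos.mpr hγ.le) (exp_pos _).le) r hline

/-- **Saturation of the relative-entropy quantum speed limit under pure dephasing.**
With `r(t) = (a + b e^{-γt}, a - b e^{-γt}, p/4, p/4)` the spectrum of the dephasing
Werner state (`a = p/4 + (1-p)/2`, `b = (1-p)/2`),
`|D(r(0)‖r(τ)) - (H(r(τ)) - H(r(0)))| = ∫₀^τ |∑ᵢ ṙᵢ(t) log rᵢ(τ)| dt`;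
equivalently, the quantum speed limit `T(ρ₀,ρ_τ)` of Corollary 4 equals `τ` on the
pure dephasing orbit. -/
theorem dephasing_saturates_quantum_speed_limit
    (p γ τ : ℝ) (hp : p ∈ Set.Ioo (0 : ℝ) 1) (hγ : 0 < γ) (hτ : 0 < τ)
    (a b : ℝ) (ha : a = p / 4 + (1 - p) / 2) (hb : b = (1 - p) / 2)
    (r : ℝ → Fin 4 → ℝ)
    (hr : r = fun t => ![a + b * Real.exp (-γ * t), a - b * Real.exp (-γ * t),
      p / 4, p / 4]) :
    |klDiv4 (r 0) (r τ) - (shannonH4 (r τ) - shannonH4 (r 0))| =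
      ∫ t in (0 : ℝ)..τ, |∑ i, deriv (fun s => r s i) t * Real.log (r τ i)| :=
  dephasing_saturates_quantum_speed_limit_general p γ τ hγ hτ a b r hr
end
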